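/- If for every variable x lying on a cycle of the variable transition graph of σ (restricted to variables reachable from variables of t) we have that xσ is a variable, then ⟨t, σ⟩ is not a pattern term: there exist m ≠ m' with tσ^m = tσ^{m'}. -/

import Mathlib

/-- First-order terms over a signature `S` with variables `V`. -/
inductive Tm (S V : Type) : Type
  | var : V → Tm S V
  | app : S → List (Tm S V) → Tm S V

namespace Tm
variable {S V : Type}

/-- Applying a substitution `σ : V → Tm S V` homomorphically to a term. -/
def subst (σ : V → Tm S V) : Tm S V → Tm S V
  | var x => σ x
  | app f ts => app f (ts.attach.map fun u => subst σ u.1)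
decreasing_by
  have := List.sizeOf_lt_of_mem u.2
  simp only [Tm.app.sizeOf_spec]
  omega

/-- The variable `x` occurs in the term `t`. -/
inductive Occurs (x : V) : Tm S V → Prop
  | var : Occurs x (var x)
  | app {f : S} {ts : List (Tm S V)} {t : Tm S V} :
      t ∈ ts → Occurs x t → Occurs x (app f ts)

/-- `iter σ n t` is `t σⁿ`, the `n`-fold application of `σ` to `t`. -/
def iter (σ : V → Tm S V) (n : ℕ) (t : Tm S V) : Tm S V :=
  (subst σ)^[n] t

end Tm


/-!
The variables reachable from `t` form a finite set `R`, closed under the transition graph. By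
hypothesis `σ` sends each cyclic variable of `R` to a variable, which is again cyclic, so on the
cyclic part `C` of `R` the substitution acts as a self-map `f : C → C`. A variable of `R` that is
not cyclic can only be visited once along any path, so, by well-founded induction on the finite
strict order "strictly downstream of a non-cyclic variable", every path from `t` ends up in `C`:
all variables of `t σ^N` lie in `C` for some `N`. From then on `t σ^(N + m)` is `t σ^N` renamed
by `f^[m]`, and two of the finitely many maps `f^[m] : C → C` coincide.
-/

namespace Tm
variable {S V : Type}

@[simp]
theorem subst_var (σ : V → Tm S V) (x : V) : subst σ (var x) = σ x := by rw [subst]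

@[simp]
theorem subst_app (σ : V → Tm S V) (f : S) (ts : List (Tm S V)) :
    subst σ (app f ts) = app f (ts.map (subst σ)) := by
  rw [subst, List.attach_map_val]

theorem occurs_var_iff {x y : V} : Occurs x (var y : Tm S V) ↔ x = y :=
  ⟨fun | .var => rfl, fun h => h ▸ .var⟩

theorem occurs_app_iff {x : V} {f : S} {ts : List (Tm S V)} :
    Occurs x (app f ts) ↔ ∃ u ∈ ts, Occurs x u :=
  ⟨fun | .app hu hx => ⟨_, hu, hx⟩, fun ⟨_, hu, hx⟩ => .app hu hx⟩

theorem subst_var_eq_self : ∀ u : Tm S V, subst var u = u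
  | var x => subst_var _ x
  | app f ts => by
    rw [subst_app]
    congr 1
    conv_rhs => rw [← List.map_id ts]
    exact List.map_congr_left fun u hu =>
      have := List.sizeOf_lt_of_mem hu
      subst_var_eq_self u
decreasing_by simp only [Tm.app.sizeOf_spec]; omega

theorem subst_subst (σ τ : V → Tm S V) :
    ∀ u : Tm S V, subst σ (subst τ u) = subst (fun x => subst σ (τ x)) u
  | var x => by simp only [subst_var]
  | app f ts => by
    simp only [subst_app, List.map_map]
    congr 1
    exact List.map_congr_left fun u hu =>
      have := List.sizeOf_lt_of_mem hu
      subst_subst σ τ u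
decreasing_by simp only [Tm.app.sizeOf_spec]; omega

theorem subst_congr {σ τ : V → Tm S V} :
    ∀ u : Tm S V, (∀ x, Occurs x u → σ x = τ x) → subst σ u = subst τ u
  | var x, h => by simpa only [subst_var] using h x .var
  | app f ts, h => by
    simp only [subst_app]
    congr 1
    exact List.map_congr_left fun u hu =>
      have := List.sizeOf_lt_of_mem hu
      subst_congr u fun x hx => h x (.app hu hx)
decreasing_by simp only [Tm.app.sizeOf_spec]; omega

theorem occurs_subst {σ : V → Tm S V} {x : V} :
    ∀ {u : Tm S V}, Occurs x (subst σ u) ↔ ∃ y, Occurs y u ∧ Occurs x (σ y)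
  | var z => by simp only [subst_var, occurs_var_iff, exists_eq_left]
  | app f ts => by
    rw [subst_app, occurs_app_iff]
    constructor
    · rintro ⟨_, hu, hx⟩
      obtain ⟨w, hw, rfl⟩ := List.mem_map.mp hu
      have := List.sizeOf_lt_of_mem hw
      obtain ⟨y, hy, hx⟩ := occurs_subst.mp hx
      exact ⟨y, .app hw hy, hx⟩
    · rintro ⟨y, hy, hx⟩
      obtain ⟨w, hw, hy⟩ := occurs_app_iff.mp hy
      have := List.sizeOf_lt_of_mem hw
      exact ⟨_, List.mem_map_of_mem hw, occurs_subst.mpr ⟨y, hy, hx⟩⟩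
decreasing_by all_goals simp only [Tm.app.sizeOf_spec]; omega

theorem finite_setOf_occurs : ∀ u : Tm S V, {x | Occurs x u}.Finite
  | var z => (Set.finite_singleton z).subset fun _ hx => occurs_var_iff.mp hx
  | app f ts => by
    have hts : ∀ u ∈ ts, {x | Occurs x u}.Finite := fun u hu =>
      have := List.sizeOf_lt_of_mem hu
      finite_setOf_occurs u
    refine ((List.finite_toSet ts).biUnion hts).subset fun x hx => ?_
    obtain ⟨u, hu, hx⟩ := occurs_app_iff.mp hx
    exact Set.mem_biUnion hu hx
decreasing_by simp only [Tm.app.sizeOf_spec]; omega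

@[simp]
theorem iter_one (σ : V → Tm S V) (u : Tm S V) : iter σ 1 u = subst σ u := rfl

theorem iter_succ (σ : V → Tm S V) (n : ℕ) (u : Tm S V) :
    iter σ (n + 1) u = subst σ (iter σ n u) := Function.iterate_succ_apply' _ _ _

theorem iter_succ' (σ : V → Tm S V) (n : ℕ) (u : Tm S V) :
    iter σ (n + 1) u = iter σ n (subst σ u) := Function.iterate_succ_apply _ _ _

theorem iter_add (σ : V → Tm S V) (m n : ℕ) (u : Tm S V) :
    iter σ (m + n) u = iter σ m (iter σ n u) := Function.iterate_add_apply _ _ _ _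

theorem iter_eq_subst (σ : V → Tm S V) (n : ℕ) (u : Tm S V) :
    iter σ n u = subst (fun x => iter σ n (var x)) u := by
  induction n generalizing u with
  | zero => exact (subst_var_eq_self u).symm
  | succ n ih => simp only [iter_succ, ih u, subst_subst]

theorem occurs_iter {σ : V → Tm S V} {n : ℕ} {u : Tm S V} {z : V} :
    Occurs z (iter σ n u) ↔ ∃ y, Occurs y u ∧ Occurs z (iter σ n (var y)) := by
  rw [iter_eq_subst, occurs_subst]

theorem Occurs.iter_trans {σ : V → Tm S V} {x y z : V} {k k' : ℕ}
    (hy : Occurs y (iter σ k (Tm.var x))) (hz : Occurs z (iter σ k' (Tm.var y))) :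
    Occurs z (iter σ (k' + k) (Tm.var x)) := by
  rw [iter_add]
  exact occurs_iter.mpr ⟨y, hy, hz⟩

def IsTransitionClosed (σ : V → Tm S V) (P : Set V) : Prop :=
  ∀ x ∈ P, ∀ y, Occurs y (σ x) → y ∈ P

theorem IsTransitionClosed.occurs_iter_mem {σ : V → Tm S V} {P : Set V}
    (hP : IsTransitionClosed σ P) {u : Tm S V} (hu : ∀ x, Occurs x u → x ∈ P) (n : ℕ) :
    ∀ x, Occurs x (iter σ n u) → x ∈ P := by
  induction n with
  | zero => exact hu
  | succ n ih =>
    intro x hx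
    rw [iter_succ, occurs_subst] at hx
    obtain ⟨y, hy, hx⟩ := hx
    exact hP y (ih y hy) x hx

def reachableVars (σ : V → Tm S V) (u : Tm S V) : Set V :=
  {x | ∃ n, Occurs x (iter σ n u)}

theorem isTransitionClosed_reachableVars (σ : V → Tm S V) (u : Tm S V) :
    IsTransitionClosed σ (reachableVars σ u) := fun _ ⟨n, hx⟩ y hy =>
  ⟨n + 1, by rw [iter_succ, occurs_subst]; exact ⟨_, hx, hy⟩⟩

theorem finite_reachableVars {σ : V → Tm S V} (hσ : {x | σ x ≠ var x}.Finite) (u : Tm S V) :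
    (reachableVars σ u).Finite := by
  have hsub : ∀ n x, Occurs x (iter σ n u) →
      Occurs x u ∨ x ∈ ⋃ z ∈ {z | σ z ≠ var z}, {x | Occurs x (σ z)} := by
    intro n
    induction n with
    | zero => exact fun x hx => .inl hx
    | succ n ih =>
      intro x hx
      rw [iter_succ, occurs_subst] at hx
      obtain ⟨y, hy, hx⟩ := hx
      by_cases hyσ : σ y = var y
      · rw [hyσ, occurs_var_iff] at hx
        exact hx ▸ ih y hy
      · exact .inr (Set.mem_biUnion hyσ hx)
  exact ((finite_setOf_occurs u).union (hσ.biUnion fun z _ => finite_setOf_occurs (σ z))).subset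
    fun x ⟨n, hx⟩ => hsub n x hx

def IsCyclicVar (σ : V → Tm S V) (x : V) : Prop :=
  ∃ k, 0 < k ∧ Occurs x (iter σ k (var x))

theorem IsCyclicVar.of_subst_eq_var {σ : V → Tm S V} {x y : V} (hx : IsCyclicVar σ x)
    (hxy : σ x = var y) : IsCyclicVar σ y := by
  obtain ⟨k, hk, hxk⟩ := hx
  have hy : Occurs y (iter σ 1 (var x)) := by
    rw [iter_one, subst_var, hxy]; exact .var
  refine ⟨k, hk, ?_⟩
  simpa only [Nat.add_comm 1 k, iter_succ', subst_var, hxy] using hxk.iter_trans hy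

theorem eventually_occurs_iter_mem_iff {σ : V → Tm S V} {P : Set V} {u : Tm S V} :
    (∀ᶠ n in Filter.atTop, ∀ z, Occurs z (iter σ n u) → z ∈ P) ↔
      ∀ y, Occurs y u →
        ∀ᶠ n in Filter.atTop, ∀ z, Occurs z (iter σ n (var y)) → z ∈ P := by
  have hsplit : ∀ n, (∀ z, Occurs z (iter σ n u) → z ∈ P) ↔
      ∀ y ∈ {y | Occurs y u}, ∀ z, Occurs z (iter σ n (var y)) → z ∈ P := fun n => by
    simp only [occurs_iter (u := u), forall_exists_index, and_imp]
    exact ⟨fun h y hy z hz => h z y hy hz, fun h z y hy hz => h y hy z hz⟩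
  simp only [hsplit]
  exact Filter.eventually_all_finite (finite_setOf_occurs u)

theorem eventually_occurs_iter_mem {σ : V → Tm S V} {R P : Set V} (hR : R.Finite)
    (hRσ : IsTransitionClosed σ R) (hP : IsTransitionClosed σ P)
    (hRP : ∀ x ∈ R, IsCyclicVar σ x → x ∈ P) {x : V} (hx : x ∈ R) :
    ∀ᶠ n in Filter.atTop, ∀ z, Occurs z (iter σ n (var x)) → z ∈ P := by
  let below : V → V → Prop := fun y x =>
    ¬ IsCyclicVar σ x ∧ ∃ k, 0 < k ∧ Occurs y (iter σ k (var x))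
  have : IsStrictOrder V below :=
    { irrefl := fun x ⟨hx, k, hk, hxk⟩ => hx ⟨k, hk, hxk⟩
      trans := fun _ _ _ ⟨_, k, hk, hab⟩ ⟨hc, k', _, hbc⟩ =>
        ⟨hc, k + k', by omega, hbc.iter_trans hab⟩ }
  refine (hR.wellFoundedOn (r := below)).induction hx
    (P := fun y => ∀ᶠ n in Filter.atTop, ∀ z, Occurs z (iter σ n (var y)) → z ∈ P)
    fun y hy ih => ?_
  by_cases hcyc : IsCyclicVar σ y
  · refine .of_forall (hP.occurs_iter_mem fun z hz => ?_)
    exact occurs_var_iff.mp hz ▸ hRP y hy hcyc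
  · have hσy : ∀ᶠ n in Filter.atTop, ∀ z, Occurs z (iter σ n (σ y)) → z ∈ P :=
      eventually_occurs_iter_mem_iff.mpr fun z hz =>
        ih z (hRσ y hy z hz) ⟨hcyc, 1, one_pos, by rwa [iter_one, subst_var]⟩
    rw [← Filter.map_add_atTop_eq_nat 1, Filter.eventually_map]
    simpa only [iter_succ', subst_var] using hσy

theorem iter_eq_subst_iterate {σ : V → Tm S V} {P : Set V} {f : V → V}
    (hf : ∀ x ∈ P, σ x = var (f x)) (hfP : Set.MapsTo f P P) {s : Tm S V}
    (hs : ∀ x, Occurs x s → x ∈ P) (m : ℕ) :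
    iter σ m s = subst (fun x => var (f^[m] x)) s := by
  induction m with
  | zero => exact (subst_var_eq_self s).symm
  | succ m ih =>
    rw [iter_succ, ih, subst_subst]
    refine subst_congr s fun x hx => ?_
    rw [subst_var, hf _ (hfP.iterate m (hs x hx)), Function.iterate_succ_apply']

theorem exists_ne_iter_eq_of_forall_occurs_mem {σ : V → Tm S V} {P : Set V} (hPfin : P.Finite)
    {f : V → V} (hf : ∀ x ∈ P, σ x = var (f x)) (hfP : Set.MapsTo f P P) {s : Tm S V}
    (hs : ∀ x, Occurs x s → x ∈ P) :
    ∃ m m', m ≠ m' ∧ iter σ m s = iter σ m' s := by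
  have := hPfin.to_subtype
  obtain ⟨m, m', hne, heq⟩ :=
    Finite.exists_ne_map_eq_of_infinite fun m => (hfP.restrict f P P)^[m]
  refine ⟨m, m', hne, ?_⟩
  rw [iter_eq_subst_iterate hf hfP hs, iter_eq_subst_iterate hf hfP hs]
  refine subst_congr s fun x hx => ?_
  have := congrArg Subtype.val (congrFun heq ⟨x, hs x hx⟩)
  rw [Set.MapsTo.coe_iterate_restrict, Set.MapsTo.coe_iterate_restrict] at this
  rw [this]

end Tm

/-- If every variable `x` lying on a cycle of the variable transition graph of `σ`
restricted to the variables reachable from variables of `t` satisfies that `x σ` is a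
variable, then `⟨t, σ⟩` is not a pattern term: some iterates coincide. -/
theorem not_pattern_term_of_all_cycle_vars_map_to_vars {S V : Type}
    (t : Tm S V) (σ : V → Tm S V)
    (hfin : {x : V | σ x ≠ Tm.var x}.Finite)
    (h : ∀ x : V,
      (∃ y : V, Tm.Occurs y t ∧ ∃ j : ℕ, Tm.Occurs x (Tm.iter σ j (Tm.var y))) →
      (∃ k : ℕ, 0 < k ∧ Tm.Occurs x (Tm.iter σ k (Tm.var x))) →
      ∃ y : V, σ x = Tm.var y) :
    ∃ m m' : ℕ, m ≠ m' ∧ Tm.iter σ m t = Tm.iter σ m' t := by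
  set C := Tm.reachableVars σ t ∩ {x | Tm.IsCyclicVar σ x}
  have hC : ∀ x ∈ C, ∃ y, σ x = Tm.var y := fun x ⟨⟨n, hx⟩, hcyc⟩ =>
    h x (by obtain ⟨y, hy, hxy⟩ := Tm.occurs_iter.mp hx; exact ⟨y, hy, n, hxy⟩) hcyc
  choose! f hf using hC
  have hfC : Set.MapsTo f C C := fun x hx =>
    ⟨Tm.isTransitionClosed_reachableVars σ t x hx.1 _ (by rw [hf x hx]; exact .var),
      hx.2.of_subst_eq_var (hf x hx)⟩
  have hCσ : Tm.IsTransitionClosed σ C := fun x hx y hy => by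
    rw [hf x hx, Tm.occurs_var_iff] at hy
    exact hy ▸ hfC hx
  have hR := Tm.finite_reachableVars hfin t
  obtain ⟨N, hN⟩ := (Tm.eventually_occurs_iter_mem_iff (u := t) |>.mpr fun y hy =>
    Tm.eventually_occurs_iter_mem hR (Tm.isTransitionClosed_reachableVars σ t) hCσ
      (fun x hx hcyc => ⟨hx, hcyc⟩) ⟨0, hy⟩).exists
  obtain ⟨m, m', hne, heq⟩ :=
    Tm.exists_ne_iter_eq_of_forall_occurs_mem (hR.inter_of_left _) hf hfC hN
  exact ⟨m + N, m' + N, by omega, by rw [Tm.iter_add, Tm.iter_add, heq]⟩
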